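/- Let u : ℝ → ℝ be continuous and 1-periodic, let k_R > 0, and suppose that for every k ∈ ℤ the Fourier coefficient û(k) = ∫₀¹ u(x) e^{−2πikx} dx equals ( z1 u(0) + z2 u(R) e^{−2πikR} ) / ( k_R² + 4π²k² ). Then for every N ∈ ℕ and every x ∈ ℝ, (Π_N^⊥ u)(x) = ∑_{k=N+1}^∞ ( 2 / (k_R² + 4π²k²) ) · ( z1 u(0) cos(2πkx) + z2 u(R) cos(2πk(x−R)) ), the series converging absolutely. (Lemma giving the explicit expression of the projection remainder.) -/

import Mathlib

open MeasureTheory intervalIntegral Real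

noncomputable section

/-- Fourier coefficient `ŵ(k) = ∫₀¹ w(x) e^{−2πikx} dx`. -/
def fc (w : ℝ → ℝ) (k : ℤ) : ℂ :=
  ∫ x in (0:ℝ)..1, (w x : ℂ) * Complex.exp (-(2 * (π:ℂ) * Complex.I * (k:ℂ) * (x:ℂ)))

/-- `(Π_N^⊥ w)(x) = w(x) − ∑_{|k|≤N} ŵ(k) e^{2πikx}`. -/
def projPerp (N : ℕ) (w : ℝ → ℝ) (x : ℝ) : ℝ :=
  w x - (∑ k ∈ Finset.Icc (-(N:ℤ)) (N:ℤ),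
    fc w k * Complex.exp (2 * (π:ℂ) * Complex.I * (k:ℂ) * (x:ℂ))).re

/-!
The hypothesis gives `|û(k)| = O(k⁻²)`, so the Fourier series of `u` converges absolutely and,
`u` being continuous, pointwise to `u`. Since `e^{−2πikR} e^{2πikx} = e^{2πik(x−R)}`, the real
part of its `k`-th term is `(z1 u(0) cos(2πkx) + z2 u(R) cos(2πk(x−R))) / (k_R² + 4π²k²)`, which is
even in `k`; removing the modes `|k| ≤ N` and pairing `k` with `−k` gives the series for `Π_N^⊥ u`.
-/

theorem HasSum.nat_add_neg_tail {G : Type*} [AddCommGroup G] [TopologicalSpace G]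
    [IsTopologicalAddGroup G] {g : ℤ → G} {s : G} (hg : HasSum g s) (N : ℕ) :
    HasSum (fun k : ℕ => g ((N : ℤ) + 1 + k) + g (-((N : ℤ) + 1 + k)))
      (s - ∑ k ∈ Finset.Icc (-(N : ℤ)) N, g k) := by
  set S := Finset.Icc (-(N : ℤ)) N
  have hlow : HasSum (fun k => if k ∈ S then g k else 0) (∑ k ∈ S, g k) := by
    simpa using hasSum_sum_of_ne_finset_zero (s := S) (fun k hk => if_neg hk)
  have hhigh := (hg.sub hlow).nat_add_neg
  -- once the modes `|k| ≤ N` are removed, the first `N + 1` paired terms vanish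
  rw [← hasSum_nat_add_iff' (N + 1)] at hhigh
  convert hhigh using 1
  · ext k
    have h1 : ((k + (N + 1) : ℕ) : ℤ) ∉ S := by simp only [S, Finset.mem_Icc]; omega
    have h2 : -((k + (N + 1) : ℕ) : ℤ) ∉ S := by simp only [S, Finset.mem_Icc]; omega
    simp only [if_neg h1, if_neg h2, sub_zero]
    push_cast; ring_nf
  · have hzero : ∀ i ∈ Finset.range (N + 1), (g i - if (i : ℤ) ∈ S then g i else 0) +
        (g (-i) - if -(i : ℤ) ∈ S then g (-i) else 0) = 0 := by
      intro i hi
      have : (i : ℤ) ∈ S ∧ -(i : ℤ) ∈ S := by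
        simp only [S, Finset.mem_Icc, Finset.mem_range] at hi ⊢; omega
      simp [this.1, this.2]
    have h0 : (0 : ℤ) ∈ S := by simp [S]
    rw [Finset.sum_eq_zero hzero, if_pos h0]
    abel

section

open Complex

theorem fourierCoeff_periodic_lift_eq_fc {u : ℝ → ℝ} (hper : Function.Periodic u 1) (k : ℤ) :
    fourierCoeff (hper.comp ((↑) : ℝ → ℂ)).lift k = fc u k := by
  rw [fourierCoeff_eq_intervalIntegral _ k 0, fc]
  simp only [zero_add, one_smul, div_one]
  refine integral_congr fun y _ => ?_
  simp only [Function.Periodic.lift_coe, Function.comp_apply, fourier_coe_apply, smul_eq_mul]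
  push_cast
  ring_nf

theorem hasSum_fc_mul_exp {u : ℝ → ℝ} (hu : Continuous u) (hper : Function.Periodic u 1)
    (hs : Summable (fc u)) (x : ℝ) :
    HasSum (fun k : ℤ => fc u k * exp (2 * π * I * k * x)) (u x) := by
  have : Fact (0 < (1 : ℝ)) := ⟨one_pos⟩
  have hper' := hper.comp ((↑) : ℝ → ℂ)
  let F : C(AddCircle (1 : ℝ), ℂ) :=
    ⟨hper'.lift, (continuous_ofReal.comp hu).quotient_liftOn' _⟩
  have hcoeff : fourierCoeff F = fc u := funext (fourierCoeff_periodic_lift_eq_fc hper)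
  have hF := has_pointwise_sum_fourier_series_of_summable (hcoeff ▸ hs) (x : AddCircle (1 : ℝ))
  convert hF using 1
  · ext k
    rw [hcoeff, fourier_coe_apply, smul_eq_mul]
    push_cast
    ring_nf
  · rfl

/-- The Fourier coefficients of the 1-periodic solution of `−w'' + kR² w = a δ₀ + b δ_R`. -/
def twoPointCoeff (a b kR R : ℝ) (k : ℤ) : ℂ :=
  (a + b * exp (-(2 * π * I * k * R))) / (kR ^ 2 + 4 * π ^ 2 * k ^ 2)

theorem ofReal_sq_add_four_pi_sq_mul_sq (kR : ℝ) (k : ℤ) :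
    (kR : ℂ) ^ 2 + 4 * π ^ 2 * k ^ 2 = ((kR ^ 2 + 4 * π ^ 2 * k ^ 2 : ℝ) : ℂ) := by
  push_cast; ring

theorem norm_twoPointCoeff_le (a b kR R : ℝ) {k : ℤ} (hk : k ≠ 0) :
    ‖twoPointCoeff a b kR R k‖ ≤ (|a| + |b|) / (4 * π ^ 2) * (1 / (k : ℝ) ^ 2) := by
  have hk2 : 0 < 4 * π ^ 2 * (k : ℝ) ^ 2 := by positivity
  have hnum : ‖(a : ℂ) + b * exp (-(2 * π * I * k * R))‖ ≤ |a| + |b| := by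
    have hexp : ‖exp (-(2 * π * I * k * R))‖ = 1 := by
      rw [show -(2 * π * I * k * R) = ((-(2 * π * k * R) : ℝ) : ℂ) * I by
        push_cast; ring]
      exact norm_exp_ofReal_mul_I _
    calc _ ≤ ‖(a : ℂ)‖ + ‖(b : ℂ) * exp (-(2 * π * I * k * R))‖ := norm_add_le _ _
      _ = |a| + |b| := by rw [norm_mul, hexp, mul_one, norm_real, norm_real]; rfl
  rw [twoPointCoeff, ofReal_sq_add_four_pi_sq_mul_sq, norm_div, norm_real,
    Real.norm_of_nonneg (by positivity), div_mul_div_comm, mul_one]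
  gcongr
  nlinarith [sq_nonneg kR]

theorem summable_twoPointCoeff (a b kR R : ℝ) : Summable (twoPointCoeff a b kR R) :=
  Summable.of_norm_bounded_eventually
    ((Real.summable_one_div_int_pow.mpr one_lt_two).mul_left _)
    ((Filter.eventually_cofinite_ne 0).mono fun _ hk => norm_twoPointCoeff_le a b kR R hk)

theorem re_twoPointCoeff_mul_exp (a b kR R x : ℝ) (k : ℤ) :
    (twoPointCoeff a b kR R k * exp (2 * π * I * k * x)).re =
      (a * Real.cos (2 * π * k * x) + b * Real.cos (2 * π * k * (x - R))) /
        (kR ^ 2 + 4 * π ^ 2 * k ^ 2) := by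
  have hexp : exp (-(2 * π * I * k * R)) * exp (2 * π * I * k * x) =
      exp (((2 * π * k * (x - R) : ℝ) : ℂ) * I) := by
    rw [← Complex.exp_add]; push_cast; ring_nf
  rw [twoPointCoeff, ofReal_sq_add_four_pi_sq_mul_sq, div_mul_eq_mul_div, add_mul,
    mul_assoc (b : ℂ), hexp,
    show 2 * π * I * k * x = ((2 * π * k * x : ℝ) : ℂ) * I by push_cast; ring,
    div_ofReal_re, exp_mul_I, exp_mul_I, ← ofReal_cos, ← ofReal_sin, ← ofReal_cos, ← ofReal_sin]
  simp only [add_re, mul_re, ofReal_re, ofReal_im, I_re, I_im]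
  ring

end

theorem projPerp_explicit_general (z1 z2 R : ℝ) (u : ℝ → ℝ) (hu : Continuous u)
    (huper : ∀ x, u (x + 1) = u x) (kR : ℝ)
    (hfc : ∀ k : ℤ, fc u k =
      ((z1:ℂ) * (u 0 : ℂ) + (z2:ℂ) * (u R : ℂ) *
          Complex.exp (-(2 * (π:ℂ) * Complex.I * (k:ℂ) * (R:ℂ)))) /
        ((kR:ℂ) ^ 2 + 4 * (π:ℂ) ^ 2 * (k:ℂ) ^ 2)) :
    ∀ (N : ℕ) (x : ℝ),
      Summable (fun k : ℕ =>
        |2 / (kR ^ 2 + 4 * π ^ 2 * ((N : ℝ) + 1 + (k : ℝ)) ^ 2) *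
          (z1 * u 0 * Real.cos (2 * π * ((N : ℝ) + 1 + (k : ℝ)) * x) +
            z2 * u R * Real.cos (2 * π * ((N : ℝ) + 1 + (k : ℝ)) * (x - R)))|) ∧
      projPerp N u x = ∑' k : ℕ,
        2 / (kR ^ 2 + 4 * π ^ 2 * ((N : ℝ) + 1 + (k : ℝ)) ^ 2) *
          (z1 * u 0 * Real.cos (2 * π * ((N : ℝ) + 1 + (k : ℝ)) * x) +
            z2 * u R * Real.cos (2 * π * ((N : ℝ) + 1 + (k : ℝ)) * (x - R))) := by
  have hcoeff : fc u = twoPointCoeff (z1 * u 0) (z2 * u R) kR R := by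
    funext k; rw [hfc k, twoPointCoeff]; push_cast; ring
  intro N x
  set term : ℤ → ℝ := fun k => (z1 * u 0 * Real.cos (2 * π * k * x) +
    z2 * u R * Real.cos (2 * π * k * (x - R))) / (kR ^ 2 + 4 * π ^ 2 * k ^ 2) with hterm
  have hre (k : ℤ) :
      (fc u k * Complex.exp (2 * (π:ℂ) * Complex.I * (k:ℂ) * (x:ℂ))).re = term k := by
    rw [hcoeff]; exact re_twoPointCoeff_mul_exp _ _ _ _ _ _
  have hsum : HasSum term (u x) := by
    simpa only [hre, Complex.ofReal_re] using Complex.hasSum_re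
      (hasSum_fc_mul_exp hu huper (hcoeff ▸ summable_twoPointCoeff _ _ _ _) x)
  have heven (k : ℤ) : term (-k) = term k := by
    simp only [hterm, Int.cast_neg, neg_sq, mul_neg, neg_mul, Real.cos_neg]
  have hproj : projPerp N u x = u x - ∑ k ∈ Finset.Icc (-(N : ℤ)) N, term k := by
    simp only [projPerp, Complex.re_sum, hre]
  have htail := hproj ▸ hsum.nat_add_neg_tail N
  simp only [heven, ← two_mul] at htail
  have hfun : (fun k : ℕ => 2 * term ((N : ℤ) + 1 + k)) = fun k : ℕ =>
      2 / (kR ^ 2 + 4 * π ^ 2 * ((N : ℝ) + 1 + (k : ℝ)) ^ 2) *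
        (z1 * u 0 * Real.cos (2 * π * ((N : ℝ) + 1 + (k : ℝ)) * x) +
          z2 * u R * Real.cos (2 * π * ((N : ℝ) + 1 + (k : ℝ)) * (x - R))) := by
    funext k; simp only [hterm]; push_cast; ring
  rw [hfun] at htail
  exact ⟨htail.summable.abs, htail.tsum_eq.symm⟩

/-- If `u` is continuous, 1-periodic, and its Fourier coefficients satisfy
`û(k) = (z1 u(0) + z2 u(R) e^{−2πikR})/(k_R² + 4π²k²)` with `k_R > 0`, then for every
`N` and `x`, `(Π_N^⊥ u)(x) = ∑_{k=N+1}^∞ 2/(k_R²+4π²k²)·(z1 u(0) cos(2πkx) + z2 u(R) cos(2πk(x−R)))`,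
the series converging absolutely. (Lemma 2, eq. (PiNuNx).) -/
theorem projPerp_explicit (z1 z2 R : ℝ) (hz1 : 0 < z1) (hz2 : 0 < z2)
    (hR : R ∈ Set.Ioo (0 : ℝ) 1) (u : ℝ → ℝ) (hu : Continuous u)
    (huper : ∀ x, u (x + 1) = u x) (kR : ℝ) (hkR : 0 < kR)
    (hfc : ∀ k : ℤ, fc u k =
      ((z1:ℂ) * (u 0 : ℂ) + (z2:ℂ) * (u R : ℂ) *
          Complex.exp (-(2 * (π:ℂ) * Complex.I * (k:ℂ) * (R:ℂ)))) /
        ((kR:ℂ) ^ 2 + 4 * (π:ℂ) ^ 2 * (k:ℂ) ^ 2)) :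
    ∀ (N : ℕ) (x : ℝ),
      Summable (fun k : ℕ =>
        |2 / (kR ^ 2 + 4 * π ^ 2 * ((N : ℝ) + 1 + (k : ℝ)) ^ 2) *
          (z1 * u 0 * Real.cos (2 * π * ((N : ℝ) + 1 + (k : ℝ)) * x) +
            z2 * u R * Real.cos (2 * π * ((N : ℝ) + 1 + (k : ℝ)) * (x - R)))|) ∧
      projPerp N u x = ∑' k : ℕ,
        2 / (kR ^ 2 + 4 * π ^ 2 * ((N : ℝ) + 1 + (k : ℝ)) ^ 2) *
          (z1 * u 0 * Real.cos (2 * π * ((N : ℝ) + 1 + (k : ℝ)) * x) +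
            z2 * u R * Real.cos (2 * π * ((N : ℝ) + 1 + (k : ℝ)) * (x - R))) :=
  projPerp_explicit_general z1 z2 R u hu huper kR hfc

end
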